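/- arXiv:2505.07878 — 13 statements merged into one kernel-verified Lean document; each statement's English description precedes it below -/
import Mathlib

section
/- Let n, m, l be natural numbers with n ≥ 2, m ≥ 2, l ≥ 2, and suppose that x^n ≡ 1 (mod l) for every nonnegative integer x not divisible by l. If m < l, then for every nonnegative integer b and every natural number s ≥ 1, the number of m-tuples (x_1,…,x_m) of nonnegative integers with x_1^n + ⋯ + x_m^n = b·(l^s)^n equals the number of m-tuples of nonnegative integers with x_1^n + ⋯ + x_m^n = b. -/
lemma aux_key (n m l : ℕ) (hn : 2 ≤ n) (hl : 2 ≤ l)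
    (hcong : ∀ x : ℕ, ¬ l ∣ x → x ^ n ≡ 1 [MOD l]) (hml : m < l) (d : ℕ)
    (x : Fin m → ℕ) (hx : ∑ i, x i ^ n = d * l ^ n) : ∀ i, l ∣ x i := by
  classical
  have hl0 : l ≠ 0 := by omega
  set S : Finset (Fin m) := Finset.univ.filter (fun i => ¬ l ∣ x i) with hS
  have hsum : ((∑ i, x i ^ n : ℕ) : ZMod l) = (S.card : ZMod l) := by
    push_cast
    rw [← Finset.sum_filter_add_sum_filter_not Finset.univ (fun i => ¬ l ∣ x i)]
    have h1 : ∑ i ∈ S, ((x i : ZMod l)) ^ n = (S.card : ZMod l) := by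
      rw [Finset.sum_congr rfl (fun i hi => ?_), Finset.sum_const, nsmul_eq_mul, mul_one]
      have hi' : ¬ l ∣ x i := (Finset.mem_filter.mp hi).2
      have := (ZMod.natCast_eq_natCast_iff _ _ _).mpr (hcong (x i) hi')
      push_cast at this
      exact this
    have h2 : ∑ i ∈ Finset.univ.filter (fun i => ¬ ¬ l ∣ x i), ((x i : ZMod l)) ^ n = 0 := by
      apply Finset.sum_eq_zero
      intro i hi
      have hi' : l ∣ x i := not_not.mp (Finset.mem_filter.mp hi).2
      have : (x i : ZMod l) = 0 := (ZMod.natCast_eq_zero_iff _ _).mpr hi'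
      rw [this, zero_pow (by omega)]
    rw [h1, h2, add_zero]
  have hzero : ((∑ i, x i ^ n : ℕ) : ZMod l) = 0 := by
    rw [hx]
    push_cast
    rw [ZMod.natCast_self, zero_pow (by omega), mul_zero]
  have hcard : (l : ℕ) ∣ S.card := by
    have : (S.card : ZMod l) = 0 := by rw [← hsum, hzero]
    exact (ZMod.natCast_eq_zero_iff _ _).mp this
  have hle : S.card ≤ m := le_trans (Finset.card_le_card (Finset.filter_subset _ _))
    (by simp)
  have hS0 : S.card = 0 := Nat.eq_zero_of_dvd_of_lt hcard (lt_of_le_of_lt hle hml)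

  intro i
  by_contra h
  have : i ∈ S := Finset.mem_filter.mpr ⟨Finset.mem_univ i, h⟩
  have := Finset.card_pos.mpr ⟨i, this⟩
  omega

lemma aux_step (n m l : ℕ) (hn : 2 ≤ n) (hl : 2 ≤ l)
    (hcong : ∀ x : ℕ, ¬ l ∣ x → x ^ n ≡ 1 [MOD l]) (hml : m < l) (d : ℕ) :
    Nat.card {x : Fin m → ℕ // ∑ i, x i ^ n = d * l ^ n} =
    Nat.card {x : Fin m → ℕ // ∑ i, x i ^ n = d} := by
  have hl0 : 0 < l := by omega
  have hln : l ^ n ≠ 0 := pow_ne_zero _ (by omega)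
  refine Nat.card_congr ?_
  refine
    { toFun := fun x => ⟨fun i => x.1 i / l, ?_⟩
      invFun := fun y => ⟨fun i => l * y.1 i, ?_⟩
      left_inv := ?_
      right_inv := ?_ }
  · have hd := aux_key n m l hn hl hcong hml d x.1 x.2
    have hx : ∑ i, (l * (x.1 i / l)) ^ n = d * l ^ n := by
      have : (fun i => (l * (x.1 i / l)) ^ n) = fun i => x.1 i ^ n := by
        funext i; rw [Nat.mul_div_cancel' (hd i)]
      rw [Finset.sum_congr rfl (fun i _ => by rw [Nat.mul_div_cancel' (hd i)])]
      exact x.2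
    have hx' : l ^ n * ∑ i, (x.1 i / l) ^ n = l ^ n * d := by
      rw [Finset.mul_sum]
      rw [Finset.sum_congr rfl (fun i _ => (mul_pow l _ n).symm)]
      rw [hx]; ring
    exact Nat.eq_of_mul_eq_mul_left (Nat.pos_of_ne_zero hln) hx'
  · have : ∑ i, (l * y.1 i) ^ n = l ^ n * ∑ i, y.1 i ^ n := by
      rw [Finset.mul_sum]
      exact Finset.sum_congr rfl (fun i _ => mul_pow l _ n)
    rw [this, y.2]; ring
  · intro x
    have hd := aux_key n m l hn hl hcong hml d x.1 x.2
    exact Subtype.ext (funext fun i => Nat.mul_div_cancel' (hd i))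
  · intro y
    exact Subtype.ext (funext fun i => Nat.mul_div_cancel_left _ hl0)

/-- If `x^n ≡ 1 (mod l)` for every `x` not divisible by `l`, and `m < l`, then for every
nonnegative `b` and every `s ≥ 1`, the number of `m`-tuples of nonnegative integers with
`x₁^n + ⋯ + x_m^n = b·(l^s)^n` equals the number with `x₁^n + ⋯ + x_m^n = b`. -/
theorem stmt_0 (n m l : ℕ) (hn : 2 ≤ n) (hm : 2 ≤ m) (hl : 2 ≤ l)
    (hcong : ∀ x : ℕ, ¬ l ∣ x → x ^ n ≡ 1 [MOD l]) (hml : m < l) :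
    ∀ b s : ℕ, 1 ≤ s →
      Nat.card {x : Fin m → ℕ // ∑ i, x i ^ n = b * (l ^ s) ^ n} =
      Nat.card {x : Fin m → ℕ // ∑ i, x i ^ n = b} := by
  intro b s hs
  clear hs
  induction s with
  | zero => simp
  | succ s ih =>
    have heq : b * (l ^ (s + 1)) ^ n = (b * (l ^ s) ^ n) * l ^ n := by
      rw [pow_succ, mul_pow]; ring
    rw [heq, aux_step n m l hn hl hcong hml (b * (l ^ s) ^ n)]
    exact ih
end

section
/- Let p be a prime, k ≥ 1 a natural number, and n a natural number with p^k ∣ n. Then for every j with 1 ≤ j ≤ n − 1, the number p^(k+1) divides C(n, j) · p^(n−j), where C(n, j) is the binomial coefficient. -/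
/-!
From `n * C(n-1, j-1) = j * C(n, j)` and `p^k ∣ n`, the valuations satisfy
`v_p(C(n, j)) + v_p(j) ≥ k`. With `m = min (v_p j) k`, `p^m` divides the positive number `n - j`,
so `n - j ≥ p^m > m`; hence `v_p(C(n, j)) + (n - j) ≥ k + 1` in both cases of the minimum.
-/

namespace Nat

theorem le_factorization_choose_add_factorization {p k n j : ℕ} (hp : p.Prime)
    (hdvd : p ^ k ∣ n) (hj : 0 < j) (hjn : j ≤ n) :
    k ≤ (n.choose j).factorization p + j.factorization p := by
  obtain ⟨n, rfl⟩ : ∃ n', n = n' + 1 := ⟨n - 1, by omega⟩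
  obtain ⟨j, rfl⟩ : ∃ j', j = j' + 1 := ⟨j - 1, by omega⟩
  have hdvd_mul : p ^ k ∣ (n + 1).choose (j + 1) * (j + 1) := by
    rw [← add_one_mul_choose_eq]
    exact hdvd.mul_right _
  have hchoose : (n + 1).choose (j + 1) ≠ 0 := (choose_pos hjn).ne'
  rwa [hp.pow_dvd_iff_le_factorization (mul_ne_zero hchoose j.succ_ne_zero),
    factorization_mul hchoose j.succ_ne_zero, Finsupp.add_apply] at hdvd_mul

theorem min_factorization_lt_sub {p k n j : ℕ} (hp : p.Prime) (hdvd : p ^ k ∣ n) (hjn : j < n) :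
    min (j.factorization p) k < n - j := by
  set m := min (j.factorization p) k
  have hdvd_sub : p ^ m ∣ n - j :=
    Nat.dvd_sub ((pow_dvd_pow p (min_le_right _ _)).trans hdvd)
      ((pow_dvd_pow p (min_le_left _ _)).trans (ordProj_dvd j p))
  calc m < p ^ m := Nat.lt_pow_self hp.one_lt
    _ ≤ n - j := le_of_dvd (by omega) hdvd_sub

end Nat

theorem stmt_2_general (p k n j : ℕ) (hp : p.Prime) (hdvd : p ^ k ∣ n)
    (hj : 1 ≤ j) (hjn : j ≤ n - 1) :
    p ^ (k + 1) ∣ Nat.choose n j * p ^ (n - j) := by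
  have hjlt : j < n := by omega
  have hvaluations := Nat.le_factorization_choose_add_factorization hp hdvd hj hjlt.le
  have hgap := Nat.min_factorization_lt_sub hp hdvd hjlt
  have hchoose : n.choose j ≠ 0 := (Nat.choose_pos hjlt.le).ne'
  rw [hp.pow_dvd_iff_le_factorization (mul_ne_zero hchoose (pow_ne_zero _ hp.ne_zero)),
    Nat.factorization_mul hchoose (pow_ne_zero _ hp.ne_zero), Finsupp.add_apply,
    Nat.factorization_pow, Finsupp.smul_apply, hp.factorization_self, smul_eq_mul, mul_one]
  omega

/-- If `p` is prime, `k ≥ 1`, `p^k ∣ n`, and `1 ≤ j ≤ n - 1`, then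
`p^(k+1) ∣ C(n, j) · p^(n-j)`. -/
theorem stmt_2 (p k n j : ℕ) (hp : p.Prime) (hk : 1 ≤ k) (hdvd : p ^ k ∣ n)
    (hj : 1 ≤ j) (hjn : j ≤ n - 1) :
    p ^ (k + 1) ∣ Nat.choose n j * p ^ (n - j) :=
  stmt_2_general p k n j hp hdvd hj hjn
end

section
/- Let p be a prime, k ≥ 1 a natural number, and n a natural number divisible by φ(p^(k+1)), where φ is Euler's totient function. If m is a natural number with 2 ≤ m < p^(k+1), then for every nonnegative integer b and every natural number s ≥ 1, the number of m-tuples (x_1,…,x_m) of nonnegative integers with x_1^n + ⋯ + x_m^n = b·(p^s)^n equals the number of m-tuples of nonnegative integers with x_1^n + ⋯ + x_m^n = b. -/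
/-!
Modulo `N = p^(k+1)` every `n`-th power is `0` or `1`, according as `p` divides the base or not
(Euler's theorem, since `φ N ∣ n`, and `N ∣ p^n`). So a sum of `m < N` such powers is `≡ 0 mod N`
only when every base is divisible by `p`. Hence every solution of `∑ xᵢ^n = c·p^n` is `p` times a
solution of `∑ yᵢ^n = c`, and induction on `s` finishes.
-/

open Finset

theorem succ_le_of_totient_prime_pow_dvd {p k n : ℕ} (hp : p.Prime) (hn : n ≠ 0)
    (hdvd : (p ^ (k + 1)).totient ∣ n) : k + 1 ≤ n :=
  calc k + 1 ≤ 2 ^ k := Nat.lt_two_pow_self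
    _ ≤ p ^ k := Nat.pow_le_pow_left hp.two_le k
    _ ≤ p ^ k * (p - 1) := Nat.le_mul_of_pos_right _ (Nat.sub_pos_of_lt hp.one_lt)
    _ = (p ^ (k + 1)).totient := (Nat.totient_prime_pow_succ hp k).symm
    _ ≤ n := Nat.le_of_dvd (Nat.pos_of_ne_zero hn) hdvd

theorem natCast_pow_eq_ite {p k n : ℕ} (hp : p.Prime) (hn : n ≠ 0)
    (hdvd : (p ^ (k + 1)).totient ∣ n) (x : ℕ) :
    ((x ^ n : ℕ) : ZMod (p ^ (k + 1))) = if p ∣ x then 0 else 1 := by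
  split_ifs with hpx
  · rw [ZMod.natCast_eq_zero_iff]
    exact (pow_dvd_pow p (succ_le_of_totient_prime_pow_dvd hp hn hdvd)).trans
      (pow_dvd_pow_of_dvd hpx n)
  · have hco : x.Coprime (p ^ (k + 1)) :=
      ((hp.coprime_iff_not_dvd.mpr hpx).symm).pow_right (k + 1)
    obtain ⟨q, rfl⟩ := hdvd
    have hmod : x ^ ((p ^ (k + 1)).totient * q) ≡ 1 [MOD p ^ (k + 1)] := by
      simpa [pow_mul] using (Nat.ModEq.pow_totient hco).pow q
    simpa using (ZMod.natCast_eq_natCast_iff _ _ _).mpr hmod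

theorem dvd_of_natCast_sum_pow_eq_zero {ι : Type*} [Fintype ι] {p k n : ℕ} (hp : p.Prime)
    (hn : n ≠ 0) (hdvd : (p ^ (k + 1)).totient ∣ n) (hcard : Fintype.card ι < p ^ (k + 1))
    {x : ι → ℕ} (hx : ((∑ i, x i ^ n : ℕ) : ZMod (p ^ (k + 1))) = 0) (i : ι) : p ∣ x i := by
  classical
  set T := univ.filter fun j => ¬ p ∣ x j
  have hT : ((#T : ℕ) : ZMod (p ^ (k + 1))) = 0 := by
    rw [← hx, Finset.natCast_card_filter, Nat.cast_sum]
    refine Finset.sum_congr rfl fun j _ => ?_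
    rw [natCast_pow_eq_ite hp hn hdvd]
    split_ifs <;> simp_all
  have hTlt : #T < p ^ (k + 1) := (card_filter_le _ _).trans_lt (by simpa using hcard)
  have hT0 : T = ∅ :=
    card_eq_zero.mp (Nat.eq_zero_of_dvd_of_lt ((ZMod.natCast_eq_zero_iff _ _).mp hT) hTlt)
  simpa using filter_eq_empty_iff.mp hT0 (mem_univ i)

theorem card_sum_pow_eq_mul_pow_eq {ι : Type*} [Fintype ι] {q n c : ℕ} (hq : 0 < q)
    (hdiv : ∀ x : ι → ℕ, ∑ i, x i ^ n = c * q ^ n → ∀ i, q ∣ x i) :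
    Nat.card {x : ι → ℕ // ∑ i, x i ^ n = c * q ^ n} =
      Nat.card {x : ι → ℕ // ∑ i, x i ^ n = c} := by
  have hscale (y : ι → ℕ) : ∑ i, (q * y i) ^ n = (∑ i, y i ^ n) * q ^ n := by
    simp_rw [mul_pow, ← Finset.mul_sum, mul_comm]
  refine Nat.card_congr
    { toFun := fun x => ⟨fun i => x.1 i / q, ?_⟩
      invFun := fun y => ⟨fun i => q * y.1 i, by rw [hscale, y.2]⟩
      left_inv := fun x => Subtype.ext <| funext fun i => Nat.mul_div_cancel' (hdiv _ x.2 i)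
      right_inv := fun y => Subtype.ext <| funext fun i => Nat.mul_div_cancel_left _ hq }
  obtain ⟨x, hx⟩ := x
  have hx' : ∑ i, (q * (x i / q)) ^ n = c * q ^ n := by
    rw [← hx]
    exact Finset.sum_congr rfl fun i _ => by rw [Nat.mul_div_cancel' (hdiv x hx i)]
  rw [hscale] at hx'
  exact Nat.eq_of_mul_eq_mul_right (pow_pos hq n) hx'

theorem stmt_3_general (p k n m : ℕ) (hp : p.Prime)
    (hdvd : Nat.totient (p ^ (k + 1)) ∣ n) (hmp : m < p ^ (k + 1)) :
    ∀ b s : ℕ, 1 ≤ s →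
      Nat.card {x : Fin m → ℕ // ∑ i, x i ^ n = b * (p ^ s) ^ n} =
      Nat.card {x : Fin m → ℕ // ∑ i, x i ^ n = b} := by
  rintro b s -
  rcases eq_or_ne n 0 with rfl | hn
  · simp
  have hdiv (c : ℕ) (x : Fin m → ℕ) (hx : ∑ i, x i ^ n = c * p ^ n) : ∀ i, p ∣ x i := by
    refine dvd_of_natCast_sum_pow_eq_zero hp hn hdvd (by simpa using hmp) ?_
    rw [hx, ZMod.natCast_eq_zero_iff]
    exact (pow_dvd_pow p (succ_le_of_totient_prime_pow_dvd hp hn hdvd)).mul_left c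
  induction s with
  | zero => simp
  | succ s ih =>
    rw [show b * (p ^ (s + 1)) ^ n = b * (p ^ s) ^ n * p ^ n by ring,
      card_sum_pow_eq_mul_pow_eq hp.pos (hdiv _), ih]

/-- If `p` is prime, `k ≥ 1`, `φ(p^(k+1)) ∣ n` and `2 ≤ m < p^(k+1)`, then for every `b` and
every `s ≥ 1` the number of `m`-tuples of nonnegative integers with
`x₁^n + ⋯ + x_m^n = b·(p^s)^n` equals the number with `x₁^n + ⋯ + x_m^n = b`. -/
theorem stmt_3 (p k n m : ℕ) (hp : p.Prime) (hk : 1 ≤ k)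
    (hdvd : Nat.totient (p ^ (k + 1)) ∣ n) (hm : 2 ≤ m) (hmp : m < p ^ (k + 1)) :
    ∀ b s : ℕ, 1 ≤ s →
      Nat.card {x : Fin m → ℕ // ∑ i, x i ^ n = b * (p ^ s) ^ n} =
      Nat.card {x : Fin m → ℕ // ∑ i, x i ^ n = b} :=
  stmt_3_general p k n m hp hdvd hmp
end

section
/- Let p be a prime and k, l, s natural numbers with k ≥ 1, l ≥ 1, s ≥ 1 and p^k ≥ 3, and let n = φ(p^k)·l. If m is a natural number with 2 ≤ m ≤ p^k − 1, then for every nonnegative integer b, the number of m-tuples (x_1,…,x_m) of nonnegative integers with x_1^n + ⋯ + x_m^n = b·(p^s)^n equals the number of m-tuples of nonnegative integers with x_1^n + ⋯ + x_m^n = b. -/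
/-!
For `p ∤ x` Euler's theorem gives `x ^ n ≡ 1 [MOD p ^ k]`, while for `p ∣ x` we have
`p ^ k ∣ p ^ n ∣ x ^ n` because `k ≤ φ (p ^ k) ≤ n`. Hence if `x₁ ^ n + ⋯ + x_m ^ n` is divisible by
`p ^ n`, the number of `xᵢ` prime to `p` is divisible by `p ^ k`; as it is at most `m < p ^ k`, all
`xᵢ` are multiples of `p`. So `y ↦ p • y` is a bijection from the solutions for `c` onto those for
`c * p ^ n`, and iterating `s` times gives the claim.
-/

open Finset
open scoped Nat

namespace Nat

theorem le_totient_prime_pow {p : ℕ} (hp : p.Prime) : ∀ k, k ≤ φ (p ^ k)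
  | 0 => zero_le _
  | k + 1 => by
    rw [totient_prime_pow_succ hp]
    calc k + 1 ≤ p ^ k := Nat.lt_pow_self hp.one_lt
      _ ≤ p ^ k * (p - 1) := Nat.le_mul_of_pos_right _ (Nat.sub_pos_of_lt hp.one_lt)

theorem pow_modEq_ite_dvd {p k n : ℕ} (hp : p.Prime) (hkn : k ≤ n) (hφ : φ (p ^ k) ∣ n) (x : ℕ) :
    x ^ n ≡ if p ∣ x then 0 else 1 [MOD p ^ k] := by
  split_ifs with hx
  · exact (modEq_zero_iff_dvd.2 ((pow_dvd_pow p hkn).trans (pow_dvd_pow_of_dvd hx n)))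
  · obtain ⟨l, rfl⟩ := hφ
    have hcop : x.Coprime (p ^ k) := (hp.coprime_iff_not_dvd.2 hx).symm.pow_right k
    simpa [pow_mul] using (ModEq.pow_totient hcop).pow l

end Nat

section SumPowers

variable {ι : Type*} [Fintype ι] {n : ℕ}

theorem dvd_of_sum_pow_eq_mul_prime_pow {p k : ℕ} (hp : p.Prime) (hkn : k ≤ n)
    (hφ : φ (p ^ k) ∣ n) (hι : Fintype.card ι < p ^ k) {x : ι → ℕ} {c : ℕ}
    (hx : ∑ i, x i ^ n = c * p ^ n) (i : ι) : p ∣ x i := by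
  classical
  have hcard : #{i | ¬p ∣ x i} ≡ 0 [MOD p ^ k] :=
    calc #{i | ¬p ∣ x i} = ∑ i, if p ∣ x i then 0 else 1 := by
          simp [Finset.sum_ite, Finset.filter_not]
      _ ≡ ∑ i, x i ^ n [MOD p ^ k] :=
          (Nat.ModEq.sum fun i _ ↦ Nat.pow_modEq_ite_dvd hp hkn hφ (x i)).symm
      _ = c * p ^ n := hx
      _ ≡ 0 [MOD p ^ k] :=
          Nat.modEq_zero_iff_dvd.2 (dvd_mul_of_dvd_right (pow_dvd_pow p hkn) c)
  have hempty : #{i | ¬p ∣ x i} = 0 :=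
    Nat.eq_zero_of_dvd_of_lt (Nat.modEq_zero_iff_dvd.1 hcard)
      ((card_le_univ _).trans_lt hι)
  by_contra hi
  exact Finset.card_ne_zero.2 ⟨i, by simpa using hi⟩ hempty

theorem sum_pow_mul_left (d : ℕ) (y : ι → ℕ) : ∑ i, (d * y i) ^ n = d ^ n * ∑ i, y i ^ n := by
  simp [mul_pow, Finset.mul_sum]

theorem card_sum_pow_eq_mul_pow {d c : ℕ} (hd : 0 < d)
    (hdvd : ∀ x : ι → ℕ, ∑ i, x i ^ n = c * d ^ n → ∀ i, d ∣ x i) :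
    Nat.card {x : ι → ℕ // ∑ i, x i ^ n = c * d ^ n} =
      Nat.card {x : ι → ℕ // ∑ i, x i ^ n = c} := by
  let f : {y : ι → ℕ // ∑ i, y i ^ n = c} → {x : ι → ℕ // ∑ i, x i ^ n = c * d ^ n} :=
    fun y ↦ ⟨d • y.1, by simp [sum_pow_mul_left, y.2, mul_comm]⟩
  refine (Nat.card_eq_of_bijective f ⟨fun y z h ↦ ?_, fun x ↦ ?_⟩).symm
  · exact Subtype.ext (smul_right_injective _ hd.ne' (congrArg Subtype.val h))
  · choose y hy using hdvd x.1 x.2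
    have hxy : x.1 = d • y := funext hy
    refine ⟨⟨y, ?_⟩, Subtype.ext hxy.symm⟩
    have hx := x.2
    rw [hxy, Pi.smul_def] at hx
    simp only [smul_eq_mul, sum_pow_mul_left, mul_comm c] at hx
    exact Nat.eq_of_mul_eq_mul_left (pow_pos hd n) hx

end SumPowers

theorem stmt_4_general (p k l s m : ℕ) (hp : p.Prime) (hl : 1 ≤ l)
    (n : ℕ) (hn : n = Nat.totient (p ^ k) * l)
    (hmp : m ≤ p ^ k - 1) :
    ∀ b : ℕ,
      Nat.card {x : Fin m → ℕ // ∑ i, x i ^ n = b * (p ^ s) ^ n} =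
      Nat.card {x : Fin m → ℕ // ∑ i, x i ^ n = b} := by
  have hkn : k ≤ n := hn ▸ (Nat.le_totient_prime_pow hp k).trans (Nat.le_mul_of_pos_right _ hl)
  have hφ : φ (p ^ k) ∣ n := hn ▸ dvd_mul_right _ l
  have hcard : Fintype.card (Fin m) < p ^ k := by
    rw [Fintype.card_fin]; have := pow_pos hp.pos k; omega
  have step (c : ℕ) := card_sum_pow_eq_mul_pow (ι := Fin m) (n := n) (c := c) hp.pos
    fun _ hx ↦ dvd_of_sum_pow_eq_mul_prime_pow hp hkn hφ hcard hx
  intro b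
  rw [← pow_mul, mul_comm s, pow_mul]
  induction s with
  | zero => simp
  | succ s ih => rw [pow_succ, ← mul_assoc, step, ih]

/-- If `p` is prime, `k, l, s ≥ 1`, `p^k ≥ 3`, `n = φ(p^k)·l` and `2 ≤ m ≤ p^k - 1`, then
for every `b` the number of `m`-tuples of nonnegative integers with
`x₁^n + ⋯ + x_m^n = b·(p^s)^n` equals the number with `x₁^n + ⋯ + x_m^n = b`. -/
theorem stmt_4 (p k l s m : ℕ) (hp : p.Prime) (hk : 1 ≤ k) (hl : 1 ≤ l) (hs : 1 ≤ s)
    (hpk : 3 ≤ p ^ k) (n : ℕ) (hn : n = Nat.totient (p ^ k) * l)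
    (hm : 2 ≤ m) (hmp : m ≤ p ^ k - 1) :
    ∀ b : ℕ,
      Nat.card {x : Fin m → ℕ // ∑ i, x i ^ n = b * (p ^ s) ^ n} =
      Nat.card {x : Fin m → ℕ // ∑ i, x i ^ n = b} :=
  stmt_4_general p k l s m hp hl n hn hmp
end

section
/- Let n, m ≥ 2 be natural numbers and p_1,…,p_l distinct primes, and let m_1,…,m_l be natural numbers. Suppose that for each i ∈ {1,…,l}, every natural number m' with 2 ≤ m' ≤ m_i, every nonnegative integer b, and every natural number s ≥ 1, the number of m'-tuples of nonnegative integers with x_1^n + ⋯ + x_{m'}^n = b·(p_i^s)^n equals the number of m'-tuples with x_1^n + ⋯ + x_{m'}^n = b. Then for every natural number c ≥ 2 all of whose prime divisors lie in {p_1,…,p_l}, every nonnegative integer b, and every m with 2 ≤ m ≤ min(m_1,…,m_l), the number of m-tuples of nonnegative integers with x_1^n + ⋯ + x_m^n = b·c^n equals the number of m-tuples with x_1^n + ⋯ + x_m^n = b. -/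
/-- If for each prime `pᵢ` of a family of distinct primes, and all `2 ≤ m' ≤ mᵢ`, all `b` and
all `s ≥ 1`, the number of `m'`-tuples with `∑ xᵢ^n = b·(pᵢ^s)^n` equals the number with
`∑ xᵢ^n = b`, then for every `c ≥ 2` all of whose prime divisors lie among `p₁,…,p_l`, every
`b`, and every `m` with `2 ≤ m ≤ min(m₁,…,m_l)`, the number of `m`-tuples with
`∑ xᵢ^n = b·c^n` equals the number with `∑ xᵢ^n = b`. -/
theorem stmt_5 (n : ℕ) (hn : 2 ≤ n) (l : ℕ) (p : Fin l → ℕ) (hp : ∀ i, (p i).Prime)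
    (hinj : Function.Injective p) (M : Fin l → ℕ)
    (hyp : ∀ i : Fin l, ∀ m' : ℕ, 2 ≤ m' → m' ≤ M i → ∀ b s : ℕ, 1 ≤ s →
      Nat.card {x : Fin m' → ℕ // ∑ j, x j ^ n = b * (p i ^ s) ^ n} =
      Nat.card {x : Fin m' → ℕ // ∑ j, x j ^ n = b}) :
    ∀ c : ℕ, 2 ≤ c → (∀ q : ℕ, q.Prime → q ∣ c → ∃ i : Fin l, q = p i) →
      ∀ b m : ℕ, 2 ≤ m → (∀ i : Fin l, m ≤ M i) →
        Nat.card {x : Fin m → ℕ // ∑ j, x j ^ n = b * c ^ n} =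
        Nat.card {x : Fin m → ℕ // ∑ j, x j ^ n = b} := by
  have key : ∀ c : ℕ, 1 ≤ c → (∀ q : ℕ, q.Prime → q ∣ c → ∃ i : Fin l, q = p i) →
      ∀ b m : ℕ, 2 ≤ m → (∀ i : Fin l, m ≤ M i) →
        Nat.card {x : Fin m → ℕ // ∑ j, x j ^ n = b * c ^ n} =
        Nat.card {x : Fin m → ℕ // ∑ j, x j ^ n = b} := by
    intro c
    induction c using Nat.strong_induction_on with
    | _ c ih =>
      intro hc hdvd b m hm hM
      rcases eq_or_lt_of_le hc with h1 | h2
      · simp [← h1]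
      · -- c ≥ 2
        obtain ⟨q, hqp, hqd⟩ : ∃ q, q.Prime ∧ q ∣ c :=
          ⟨c.minFac, Nat.minFac_prime (by omega), Nat.minFac_dvd c⟩
        obtain ⟨i, hi⟩ := hdvd q hqp hqd
        set d := c / q with hd
        have hcd : c = d * q := by
          rw [hd, Nat.div_mul_cancel hqd]
        have hd1 : 1 ≤ d := Nat.div_pos (Nat.le_of_dvd (by omega) hqd) hqp.pos
        have hdlt : d < c := Nat.div_lt_self (by omega) hqp.one_lt
        have hmul : b * c ^ n = b * d ^ n * q ^ n := by
          rw [hcd, mul_pow, mul_assoc]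
        have step1 : Nat.card {x : Fin m → ℕ // ∑ j, x j ^ n = b * c ^ n} =
            Nat.card {x : Fin m → ℕ // ∑ j, x j ^ n = b * d ^ n} := by
          have h := hyp i m hm (hM i) (b * d ^ n) 1 le_rfl
          rw [pow_one, ← hi] at h
          rw [hmul, h]
        rw [step1]
        exact ih d hdlt hd1
          (fun q' hq' hdq => hdvd q' hq' (hdq.trans ⟨q, hcd⟩)) b m hm hM
  intro c hc hdvd b m hm hM
  exact key c (by omega) hdvd b m hm hM
end

section
/- Let n ≥ 2 and m ≥ 2 be natural numbers and b, c natural numbers with b ≥ 1, c ≥ 2, such that: for every nonnegative integer x, x^n ≡ 0 (mod c) or x^n ≡ 1 (mod c); m < c − 1; and the remainder of b modulo c is greater than m. Then the equation x_1^n + ⋯ + x_m^n = b has no solution in nonnegative integers. -/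
/-- If every `n`-th power is `≡ 0` or `1 (mod c)`, `m < c - 1` and the remainder of `b`
modulo `c` exceeds `m`, then `x₁^n + ⋯ + x_m^n = b` has no solution in nonnegative
integers. -/
theorem stmt_8 (n m b c : ℕ) (hn : 2 ≤ n) (hm : 2 ≤ m) (hb : 1 ≤ b) (hc : 2 ≤ c)
    (hcong : ∀ x : ℕ, x ^ n % c = 0 ∨ x ^ n % c = 1)
    (hmc : m < c - 1) (hr : m < b % c) :
    ¬ ∃ x : Fin m → ℕ, ∑ i, x i ^ n = b := by
  rintro ⟨x, hx⟩
  have h1 : b % c ≤ m := by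
    calc b % c = (∑ i, x i ^ n) % c := by rw [hx]
    _ = (∑ i, x i ^ n % c) % c := by rw [Finset.sum_nat_mod]
    _ ≤ ∑ i, x i ^ n % c := Nat.mod_le _ _
    _ ≤ ∑ _i : Fin m, 1 := Finset.sum_le_sum (fun i _ => by rcases hcong (x i) with h | h <;> omega)
    _ = m := by simp
  omega
end

section
/- Let p be a prime and k, l natural numbers with k ≥ 1, l ≥ 1 and p^k ≥ 3, and let n = φ(p^k)·l. If m is a natural number with 2 ≤ m < p^k − 1 and b is a natural number whose remainder modulo p^k is greater than m, then the equation x_1^n + ⋯ + x_m^n = b has no solution in nonnegative integers. -/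
/-! Modulo `p ^ k` every `n`-th power is `0` or `1`: a unit is killed by its totient exponent
(Euler), and a multiple of `p` raised to a power at least `k` vanishes, since `k ≤ φ (p ^ k)`.
Hence a sum of `m` such powers is congruent to the number of summands that are `1`, a number
at most `m`, so its remainder modulo `p ^ k` cannot exceed `m`. -/

open Finset
open scoped Nat

theorem Nat.le_totient_prime_pow_s9 {p : ℕ} (hp : p.Prime) (k : ℕ) : k ≤ φ (p ^ k) := by
  rcases Nat.eq_zero_or_pos k with rfl | hk
  · exact Nat.zero_le _
  rw [Nat.totient_prime_pow hp hk]
  calc k ≤ 2 ^ (k - 1) := by have := Nat.lt_two_pow_self (n := k - 1); omega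
    _ ≤ p ^ (k - 1) := Nat.pow_le_pow_left hp.two_le _
    _ ≤ p ^ (k - 1) * (p - 1) := Nat.le_mul_of_pos_right _ (by have := hp.two_le; omega)

theorem ZMod.pow_totient_prime_pow_mul_eq_zero_or_one {p : ℕ} (hp : p.Prime) (k l y : ℕ) :
    (y : ZMod (p ^ k)) ^ (φ (p ^ k) * l) = 0 ∨ (y : ZMod (p ^ k)) ^ (φ (p ^ k) * l) = 1 := by
  rcases Nat.eq_zero_or_pos l with rfl | hl
  · simp
  by_cases hpy : p ∣ y
  · left
    have hk : k ≤ φ (p ^ k) * l :=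
      (Nat.le_totient_prime_pow_s9 hp k).trans (Nat.le_mul_of_pos_right _ hl)
    rw [← Nat.cast_pow, ZMod.natCast_eq_zero_iff]
    exact (pow_dvd_pow_of_dvd hpy k).trans (pow_dvd_pow y hk)
  · right
    have : NeZero (p ^ k) := ⟨pow_ne_zero k hp.ne_zero⟩
    have hcop : y.Coprime (p ^ k) := ((hp.coprime_iff_not_dvd.mpr hpy).symm).pow_right k
    obtain ⟨u, hu⟩ := (ZMod.isUnit_iff_coprime y (p ^ k)).mpr hcop
    rw [← hu, pow_mul, ← Units.val_pow_eq_pow_val, ZMod.pow_totient, Units.val_one, one_pow]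

theorem Finset.sum_mod_le_card_of_cast_eq_zero_or_one {ι : Type*} (s : Finset ι) (f : ι → ℕ)
    (N : ℕ) (hf : ∀ i ∈ s, (f i : ZMod N) = 0 ∨ (f i : ZMod N) = 1) :
    (∑ i ∈ s, f i) % N ≤ #s := by
  classical
  have hcount :
      ((∑ i ∈ s, f i : ℕ) : ZMod N) = ((#{i ∈ s | (f i : ZMod N) = 1} : ℕ) : ZMod N) := by
    rw [Nat.cast_sum, Finset.natCast_card_filter, Finset.sum_congr rfl]
    intro i hi
    rcases hf i hi with h | h <;> simp [h]
  rw [ZMod.natCast_eq_natCast_iff'] at hcount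
  rw [hcount]
  exact (Nat.mod_le _ _).trans (card_filter_le _ _)

theorem stmt_9_general (p k l m b : ℕ) (hp : p.Prime) (n : ℕ) (hn : n = Nat.totient (p ^ k) * l)
    (hr : m < b % p ^ k) :
    ¬ ∃ x : Fin m → ℕ, ∑ i, x i ^ n = b := by
  rintro ⟨x, rfl⟩
  subst hn
  have hle := sum_mod_le_card_of_cast_eq_zero_or_one univ (fun i ↦ x i ^ (φ (p ^ k) * l)) (p ^ k)
    fun i _ ↦ by
      push_cast
      exact ZMod.pow_totient_prime_pow_mul_eq_zero_or_one hp k l (x i)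
  rw [card_univ, Fintype.card_fin] at hle
  omega

/-- If `p` is prime, `k, l ≥ 1`, `p^k ≥ 3`, `n = φ(p^k)·l`, `2 ≤ m < p^k - 1` and the
remainder of `b` modulo `p^k` exceeds `m`, then `x₁^n + ⋯ + x_m^n = b` has no solution in
nonnegative integers. -/
theorem stmt_9 (p k l m b : ℕ) (hp : p.Prime) (hk : 1 ≤ k) (hl : 1 ≤ l)
    (hpk : 3 ≤ p ^ k) (n : ℕ) (hn : n = Nat.totient (p ^ k) * l)
    (hm : 2 ≤ m) (hmp : m < p ^ k - 1) (hb : 1 ≤ b) (hr : m < b % p ^ k) :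
    ¬ ∃ x : Fin m → ℕ, ∑ i, x i ^ n = b :=
  stmt_9_general p k l m b hp n hn hr
end

section
/- Let k ≥ 2 and l ≥ 1 be natural numbers and let the exponent be n = 2^k · l. If m is a natural number with 2 ≤ m < 2^(k+2) − 1 and b is a natural number whose remainder modulo 2^(k+2) is greater than m, then the equation x_1^n + ⋯ + x_m^n = b has no solution in nonnegative integers. -/
lemma odd_pow_two_pow (j : ℕ) (hj : 1 ≤ j) (x : ℤ) (hx : Odd x) :
    (2:ℤ) ^ (j+2) ∣ x ^ (2^j) - 1 := by
  induction j with
  | zero => omega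
  | succ j ih =>
    rcases Nat.lt_or_ge 1 (j+1) with h | h
    · have hj' : 1 ≤ j := by omega
      have ih' := ih hj'
      have hy : Odd (x ^ (2^j)) := hx.pow
      obtain ⟨s, hs⟩ := hy
      have heq : x ^ (2^(j+1)) - 1 = (x^(2^j) - 1) * (x^(2^j) + 1) := by
        rw [pow_succ, pow_mul]; ring
      have : (j+1) + 2 = (j+2) + 1 := by ring
      rw [heq, this, pow_succ]
      exact mul_dvd_mul ih' ⟨s+1, by rw [hs]; ring⟩
    · have hj0 : j = 0 := by omega
      subst hj0
      obtain ⟨t, rfl⟩ := hx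
      obtain ⟨s, hs⟩ : Even (t * (t+1)) := Int.even_mul_succ_self t
      exact ⟨s, by linear_combination 4 * hs⟩

/-- If `k ≥ 2`, `l ≥ 1`, `n = 2^k·l`, `2 ≤ m < 2^(k+2) - 1` and the remainder of `b`
modulo `2^(k+2)` exceeds `m`, then `x₁^n + ⋯ + x_m^n = b` has no solution in nonnegative
integers. -/
theorem stmt_11 (k l m b : ℕ) (hk : 2 ≤ k) (hl : 1 ≤ l) (n : ℕ) (hn : n = 2 ^ k * l)
    (hm : 2 ≤ m) (hm2 : m < 2 ^ (k + 2) - 1) (hb : 1 ≤ b) (hr : m < b % 2 ^ (k + 2)) :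
    ¬ ∃ x : Fin m → ℕ, ∑ i, x i ^ n = b := by
  rintro ⟨x, hx⟩
  set N := 2 ^ (k + 2) with hN
  have hN1 : 1 < N := by
    have : (1:ℕ) < 2 ^ (k+2) := Nat.one_lt_two_pow (by omega)
    simpa [hN] using this
  have hkn : k + 2 ≤ 2 ^ k := by
    clear hn hm2 hr hx hN1
    induction k with
    | zero => omega
    | succ k ih =>
      rcases Nat.lt_or_ge k 2 with h | h
      · interval_cases k <;> simp_all <;> omega
      · have := ih h
        have : 2 ^ k < 2 ^ (k+1) := by
          exact Nat.pow_lt_pow_right (by norm_num) (by omega)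
        omega
  have key : ∀ y : ℕ, y ^ n % N ≤ 1 := by
    intro y
    rcases Nat.even_or_odd y with hy | hy
    · -- even: N ∣ y^n
      have h2 : 2 ∣ y := hy.two_dvd
      have hdvd : N ∣ y ^ n := by
        have h1 : n = (k + 2) + (n - (k+2)) := by
          have : k + 2 ≤ n := by
            rw [hn]
            calc k + 2 ≤ 2 ^ k := hkn
            _ ≤ 2 ^ k * l := Nat.le_mul_of_pos_right _ (by omega)
          omega
        rw [h1, pow_add, hN]
        exact Dvd.dvd.mul_right (pow_dvd_pow_of_dvd h2 _) _
      simp [Nat.eq_zero_of_dvd_of_lt, Nat.mod_eq_zero_of_dvd hdvd]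
    · -- odd: y^n ≡ 1 mod N
      have hint : (N:ℤ) ∣ (y:ℤ) ^ (2^k) - 1 := by
        have := odd_pow_two_pow k (by omega) (y:ℤ) (by exact_mod_cast hy)
        simpa [hN] using this
      have hmod : y ^ (2^k) ≡ 1 [MOD N] := by
        have := (Nat.modEq_iff_dvd (n := N) (a := 1) (b := y ^ (2^k))).2
          (by push_cast; simpa using hint)
        exact this.symm
      have hmodn : y ^ n ≡ 1 [MOD N] := by
        rw [hn, pow_mul]
        simpa using hmod.pow l
      have : y ^ n % N = 1 % N := hmodn
      rw [this, Nat.one_mod_eq_one.mpr (by omega)]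
  have hsum : b % N ≤ m := by
    rw [← hx, Finset.sum_nat_mod]
    calc (∑ i, x i ^ n % N) % N ≤ ∑ i, x i ^ n % N := Nat.mod_le _ _
      _ ≤ ∑ _i : Fin m, 1 := Finset.sum_le_sum (fun i _ => key (x i))
      _ = m := by simp
  omega
end

section
/- Let n ≥ 2 and m ≥ 2 be natural numbers, b ≥ 1 a natural number, and c ≥ 2 a natural number such that: for every nonnegative integer x, x^n is congruent to 0, 1, or −1 modulo c; 2m < c − 1; and the remainder r of b modulo c satisfies m + 1 ≤ r ≤ c − m − 1. Then the equation x_1^n + ⋯ + x_m^n = b has no solution in nonnegative integers. -/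
/-- If every `n`-th power is congruent to `0`, `1` or `-1` modulo `c`, `2m < c - 1` and the
remainder `r` of `b` modulo `c` satisfies `m + 1 ≤ r ≤ c - m - 1`, then
`x₁^n + ⋯ + x_m^n = b` has no solution in nonnegative integers. -/
theorem stmt_12 (n m b c : ℕ) (hn : 2 ≤ n) (hm : 2 ≤ m) (hb : 1 ≤ b) (hc : 2 ≤ c)
    (hcong : ∀ x : ℕ, ((x : ℤ) ^ n) % c = 0 ∨ ((x : ℤ) ^ n) % c = 1 % c ∨
      ((x : ℤ) ^ n) % c = (-1) % c)
    (hmc : 2 * m < c - 1) (hr1 : m + 1 ≤ b % c) (hr2 : b % c ≤ c - m - 1) :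
    ¬ ∃ x : Fin m → ℕ, ∑ i, x i ^ n = b := by
  rintro ⟨x, hx⟩
  have key : ∀ i : Fin m, ∃ e : ℤ, (e = 0 ∨ e = 1 ∨ e = -1) ∧
      ((x i : ℤ) ^ n) % c = e % c := by
    intro i
    rcases hcong (x i) with h | h | h
    · exact ⟨0, Or.inl rfl, by simpa using h⟩
    · exact ⟨1, Or.inr (Or.inl rfl), h⟩
    · exact ⟨-1, Or.inr (Or.inr rfl), h⟩
  choose e he1 he2 using key
  set t := ∑ i, e i with ht
  have hbound : ∀ i, -1 ≤ e i ∧ e i ≤ 1 := fun i => by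
    rcases he1 i with h | h | h <;> simp [h]
  have htl : -(m : ℤ) ≤ t := by
    calc (-(m : ℤ)) = ∑ _i : Fin m, (-1 : ℤ) := by simp
    _ ≤ t := Finset.sum_le_sum fun i _ => (hbound i).1
  have htu : t ≤ m := by
    calc t ≤ ∑ _i : Fin m, (1 : ℤ) := Finset.sum_le_sum fun i _ => (hbound i).2
    _ = m := by simp
  have hb' : (b : ℤ) = ∑ i, (x i : ℤ) ^ n := by
    rw [← hx]; push_cast; ring
  have hsum : (b : ℤ) % c = t % c := by
    rw [hb', Finset.sum_int_mod, ht, Finset.sum_int_mod (f := e)]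
    congr 1
    exact Finset.sum_congr rfl fun i _ => he2 i
  have hc0 : (0 : ℤ) < c := by exact_mod_cast Nat.lt_of_lt_of_le Nat.zero_lt_two hc
  have hmc' : (m : ℤ) < c := by
    have : m < c := by omega
    exact_mod_cast this
  have hnat : ((b % c : ℕ) : ℤ) = (b : ℤ) % c := by push_cast; ring
  have hcase : t % c = t ∨ t % c = t + c := by
    rcases le_or_gt 0 t with h0 | h0
    · left; exact Int.emod_eq_of_lt h0 (lt_of_le_of_lt htu hmc')
    · right
      have h1 : (t + c) % c = t % c := by simp [Int.add_mul_emod_self_left]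
      rw [← h1]
      exact Int.emod_eq_of_lt (by linarith) (by linarith)
  omega
end

section
/- Let p ≥ 3 be a prime, k ≥ 1 a natural number, l ≥ 1 an odd natural number, and let n = φ(p^k)·l/2. If m is a natural number with 2 ≤ m and 2m < p^k − 1, and b is a natural number whose remainder r modulo p^k satisfies m + 1 ≤ r ≤ p^k − m − 1, then the equation x_1^n + ⋯ + x_m^n = b has no solution in nonnegative integers. -/
/-!
Modulo `p ^ k`, every `n`-th power is `0` or `±1`. If `p ∣ x` then `x ^ n ≡ 0` because
`n ≥ k`. Otherwise `y = x ^ (φ(p ^ k) / 2)` satisfies `y ^ 2 = 1` by Euler's theorem, and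
since `p` is odd the only square roots of `1` modulo `p ^ k` are `±1`; the odd exponent `l`
keeps the sign. Hence `∑ xᵢ ^ n` is congruent to an integer `s` with `|s| ≤ m`, whereas the
residue of `b` lies at distance more than `m` from every multiple of `p ^ k`.
-/

open Nat

theorem Nat.Prime.two_lt_pow {p : ℕ} (hp : p.Prime) (hp2 : p ≠ 2) {k : ℕ} (hk : k ≠ 0) :
    2 < p ^ k :=
  (hp.two_le.lt_of_ne' hp2).trans_le (Nat.le_self_pow hk p)

theorem ZMod.eq_one_or_eq_neg_one_of_sq_eq_one {p : ℕ} (hp : p.Prime) (hp2 : p ≠ 2) (k : ℕ)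
    {v : ZMod (p ^ k)} (hv : v ^ 2 = 1) : v = 1 ∨ v = -1 := by
  obtain ⟨a, rfl⟩ := ZMod.intCast_surjective v
  have hdvd : (p : ℤ) ^ k ∣ (a - 1) * (a + 1) := by
    have := (ZMod.intCast_zmod_eq_zero_iff_dvd ((a - 1) * (a + 1)) (p ^ k)).1
      (by push_cast; linear_combination hv)
    exact_mod_cast this
  have hpZ := Nat.prime_iff_prime_int.mp hp
  have hcast (c : ℤ) (h : (p : ℤ) ^ k ∣ c) : (c : ZMod (p ^ k)) = 0 :=
    (ZMod.intCast_zmod_eq_zero_iff_dvd _ _).2 (by exact_mod_cast h)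
  by_cases h : (p : ℤ) ∣ a - 1
  · -- `p` cannot divide both factors, since their difference is `2`
    have h' : ¬ (p : ℤ) ∣ a + 1 := fun h' => hp2 <|
      (Nat.prime_dvd_prime_iff_eq hp Nat.prime_two).1 <| Int.natCast_dvd_natCast.1 <| by
        simpa using dvd_sub h' h
    left
    have := hcast _ (hpZ.pow_dvd_of_dvd_mul_right k h' hdvd)
    push_cast at this
    exact sub_eq_zero.1 this
  · right
    have := hcast _ (hpZ.pow_dvd_of_dvd_mul_left k h hdvd)
    push_cast at this
    exact eq_neg_of_add_eq_zero_left this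

theorem ZMod.pow_totient_div_two_eq_one_or_eq_neg_one {p : ℕ} (hp : p.Prime) (hp2 : p ≠ 2)
    {k : ℕ} (hk : k ≠ 0) (u : (ZMod (p ^ k))ˣ) :
    (u : ZMod (p ^ k)) ^ (φ (p ^ k) / 2) = 1 ∨ (u : ZMod (p ^ k)) ^ (φ (p ^ k) / 2) = -1 := by
  apply ZMod.eq_one_or_eq_neg_one_of_sq_eq_one hp hp2
  rw [← pow_mul, Nat.div_mul_cancel (Nat.totient_even (hp.two_lt_pow hp2 hk)).two_dvd,
    ← Units.val_pow_eq_pow_val, ZMod.pow_totient, Units.val_one]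

theorem two_mul_le_totient_prime_pow {p : ℕ} (hp : p.Prime) (hp2 : p ≠ 2) (k : ℕ) :
    2 * k ≤ φ (p ^ k) := by
  rcases k with _ | k
  · simp
  rw [Nat.totient_prime_pow hp k.succ_pos, Nat.succ_sub_one]
  have hk : k + 1 ≤ p ^ k := Nat.lt_pow_self hp.one_lt
  have hp3 : 2 ≤ p - 1 := by have := hp.two_le; omega
  calc 2 * (k + 1) = (k + 1) * 2 := by ring
    _ ≤ p ^ k * (p - 1) := Nat.mul_le_mul hk hp3

theorem ZMod.natCast_pow_totient_div_two_mul_odd {p : ℕ} (hp : p.Prime) (hp2 : p ≠ 2)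
    {k l : ℕ} (hk : k ≠ 0) (hl : Odd l) (x : ℕ) :
    ∃ e : ℤ, |e| ≤ 1 ∧ (x : ZMod (p ^ k)) ^ (φ (p ^ k) / 2 * l) = e := by
  by_cases hpx : p ∣ x
  · refine ⟨0, by simp, ?_⟩
    have hkn : k ≤ φ (p ^ k) / 2 * l := by
      have := two_mul_le_totient_prime_pow hp hp2 k
      exact ((Nat.le_div_iff_mul_le two_pos).2 (by omega)).trans
        (Nat.le_mul_of_pos_right _ hl.pos)
    rw [← Nat.cast_pow, Int.cast_zero, ZMod.natCast_eq_zero_iff]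
    exact (pow_dvd_pow p hkn).trans (pow_dvd_pow_of_dvd hpx _)
  · have hcop : x.Coprime (p ^ k) :=
      (Nat.coprime_comm.1 (hp.coprime_iff_not_dvd.2 hpx)).pow_right k
    rw [pow_mul, ← ZMod.coe_unitOfCoprime x hcop]
    rcases ZMod.pow_totient_div_two_eq_one_or_eq_neg_one hp hp2 hk (ZMod.unitOfCoprime x hcop)
      with h | h <;> rw [h]
    · exact ⟨1, by simp, by simp⟩
    · exact ⟨-1, by simp, by simp [hl.neg_one_pow]⟩

theorem Int.not_modEq_of_abs_le {N r s m : ℤ} (hs : |s| ≤ m) (hr : m < r) (hrN : r < N - m) :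
    ¬ r ≡ s [ZMOD N] := fun h => by
  obtain ⟨hs₁, hs₂⟩ := abs_le.1 hs
  have := Int.eq_zero_of_dvd_of_nonneg_of_lt (by linarith) (by linarith) h.symm.dvd
  linarith

theorem stmt_13_general (p k l m b : ℕ) (hp : p.Prime) (hp3 : 3 ≤ p) (hk : 1 ≤ k)
    (hlodd : Odd l) (n : ℕ) (hn : n = Nat.totient (p ^ k) * l / 2)
    (hr1 : m + 1 ≤ b % p ^ k) (hr2 : b % p ^ k ≤ p ^ k - m - 1) :
    ¬ ∃ x : Fin m → ℕ, ∑ i, x i ^ n = b := by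
  rintro ⟨x, rfl⟩
  have hp2 : p ≠ 2 := by omega
  have hk0 : k ≠ 0 := by omega
  have hn' : n = φ (p ^ k) / 2 * l := by
    rw [hn, Nat.div_mul_right_comm (Nat.totient_even (hp.two_lt_pow hp2 hk0)).two_dvd]
  choose e he hxe using
    fun i => ZMod.natCast_pow_totient_div_two_mul_odd hp hp2 hk0 hlodd (x i)
  refine Int.not_modEq_of_abs_le (N := (p ^ k : ℕ)) (r := ((∑ i, x i ^ n) % p ^ k : ℕ))
    (s := ∑ i, e i) (m := m) ?_ (by omega) (by omega) ?_
  · calc |∑ i, e i| ≤ ∑ i, |e i| := Finset.abs_sum_le_sum_abs _ _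
      _ ≤ ∑ _i : Fin m, 1 := Finset.sum_le_sum fun i _ => he i
      _ = m := by simp
  · rw [← ZMod.intCast_eq_intCast_iff, Int.cast_natCast, ZMod.natCast_mod]
    push_cast
    simp only [hn', hxe]

/-- If `p ≥ 3` is prime, `k ≥ 1`, `l ≥ 1` is odd, `n = φ(p^k)·l/2`, `2 ≤ m`,
`2m < p^k - 1` and the remainder `r` of `b` modulo `p^k` satisfies
`m + 1 ≤ r ≤ p^k - m - 1`, then `x₁^n + ⋯ + x_m^n = b` has no solution in nonnegative
integers. -/
theorem stmt_13 (p k l m b : ℕ) (hp : p.Prime) (hp3 : 3 ≤ p) (hk : 1 ≤ k) (hl : 1 ≤ l)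
    (hlodd : Odd l) (n : ℕ) (hn : n = Nat.totient (p ^ k) * l / 2)
    (hm : 2 ≤ m) (hm2 : 2 * m < p ^ k - 1) (hb : 1 ≤ b)
    (hr1 : m + 1 ≤ b % p ^ k) (hr2 : b % p ^ k ≤ p ^ k - m - 1) :
    ¬ ∃ x : Fin m → ℕ, ∑ i, x i ^ n = b :=
  stmt_13_general p k l m b hp hp3 hk hlodd n hn hr1 hr2
end

section
/- Let n, m ≥ 2 be natural numbers and b, c ≥ 1 natural numbers. If the number of m-tuples (x_1,…,x_m) of nonnegative integers with x_1^n + ⋯ + x_m^n = b·c^n equals the number of m-tuples of nonnegative integers with x_1^n + ⋯ + x_m^n = b, then the number of m-tuples of positive integers with x_1^n + ⋯ + x_m^n = b·c^n equals the number of m-tuples of positive integers with x_1^n + ⋯ + x_m^n = b. -/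
lemma sol_finite' (n m d : ℕ) (hn : 1 ≤ n) (p : (Fin m → ℕ) → Prop) :
    Finite {x : Fin m → ℕ // p x ∧ ∑ i, x i ^ n = d} := by
  have key : ∀ x : {x : Fin m → ℕ // p x ∧ ∑ i, x i ^ n = d}, ∀ i, x.1 i < d + 1 := by
    intro x i
    have h1 : x.1 i ≤ x.1 i ^ n := Nat.le_self_pow (by omega) _
    have h2 : x.1 i ^ n ≤ ∑ j, x.1 j ^ n :=
      Finset.single_le_sum (f := fun j => x.1 j ^ n) (fun _ _ => Nat.zero_le _)
        (Finset.mem_univ i)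
    rw [x.2.2] at h2
    omega
  apply Finite.of_injective (fun x => (fun i => (⟨x.1 i, key x i⟩ : Fin (d + 1))))
  intro x y hxy
  ext i
  exact congrArg Fin.val (congrFun hxy i)

lemma sol_finite (n m d : ℕ) (hn : 1 ≤ n) :
    Finite {x : Fin m → ℕ // ∑ i, x i ^ n = d} := by
  have key : ∀ x : {x : Fin m → ℕ // ∑ i, x i ^ n = d}, ∀ i, x.1 i < d + 1 := by
    intro x i
    have h1 : x.1 i ≤ x.1 i ^ n := Nat.le_self_pow (by omega) _
    have h2 : x.1 i ^ n ≤ ∑ j, x.1 j ^ n :=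
      Finset.single_le_sum (f := fun j => x.1 j ^ n) (fun _ _ => Nat.zero_le _)
        (Finset.mem_univ i)
    rw [x.2] at h2
    omega
  apply Finite.of_injective (fun x => (fun i => (⟨x.1 i, key x i⟩ : Fin (d + 1))))
  intro x y hxy
  ext i
  exact congrArg Fin.val (congrFun hxy i)

lemma card_split (α : Type*) [Finite α] (p : α → Prop) :
    Nat.card α = Nat.card {a // p a} + Nat.card {a // ¬ p a} := by
  classical
  rw [← Nat.card_sum]
  exact Nat.card_congr (Equiv.sumCompl p).symm

/-- If the number of nonnegative solutions of `∑ xᵢ^n = b·c^n` equals that of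
`∑ xᵢ^n = b`, then the number of positive solutions of `∑ xᵢ^n = b·c^n` equals the number
of positive solutions of `∑ xᵢ^n = b`. -/
theorem stmt_15 (n m b c : ℕ) (hn : 2 ≤ n) (hm : 2 ≤ m) (hb : 1 ≤ b) (hc : 1 ≤ c)
    (h : Nat.card {x : Fin m → ℕ // ∑ i, x i ^ n = b * c ^ n} =
         Nat.card {x : Fin m → ℕ // ∑ i, x i ^ n = b}) :
    Nat.card {x : Fin m → ℕ // (∀ i, 0 < x i) ∧ ∑ i, x i ^ n = b * c ^ n} =
    Nat.card {x : Fin m → ℕ // (∀ i, 0 < x i) ∧ ∑ i, x i ^ n = b} := by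
  classical
  have hn1 : 1 ≤ n := le_trans one_le_two hn
  have hfin1 := sol_finite n m (b * c ^ n) hn1
  have hfin2 := sol_finite n m b hn1
  have hfinP := sol_finite' n m (b * c ^ n) hn1 (fun x => ∀ i, 0 < x i)
  have hfinN := sol_finite' n m (b * c ^ n) hn1 (fun x => ¬ ∀ i, 0 < x i)
  -- the scaling map multiplies sums of n-th powers by c^n
  have hsum : ∀ x : Fin m → ℕ, ∑ i, x i ^ n = b → ∑ i, (c * x i) ^ n = b * c ^ n := by
    intro x hx
    calc ∑ i, (c * x i) ^ n = ∑ i, c ^ n * x i ^ n := by simp [mul_pow]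
    _ = c ^ n * ∑ i, x i ^ n := by rw [Finset.mul_sum]
    _ = b * c ^ n := by rw [hx, mul_comm]
  have hposiff : ∀ x : Fin m → ℕ, (∀ i, 0 < c * x i) ↔ (∀ i, 0 < x i) := by
    intro x
    constructor
    · intro hp i
      have := hp i
      exact Nat.pos_of_ne_zero (fun h0 => by simp [h0] at this)
    · intro hp i
      exact Nat.mul_pos hc (hp i)
  have hinj : ∀ x y : Fin m → ℕ, (fun i => c * x i) = (fun i => c * y i) → x = y := by
    intro x y hxy
    ext i
    have := congrFun hxy i
    exact Nat.eq_of_mul_eq_mul_left hc this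
  -- injections on positive and non-positive parts
  have hP : Nat.card {x : Fin m → ℕ // (∀ i, 0 < x i) ∧ ∑ i, x i ^ n = b} ≤
      Nat.card {x : Fin m → ℕ // (∀ i, 0 < x i) ∧ ∑ i, x i ^ n = b * c ^ n} := by
    apply Nat.card_le_card_of_injective
      (fun x : {x : Fin m → ℕ // (∀ i, 0 < x i) ∧ ∑ i, x i ^ n = b} =>
        (⟨fun i => c * x.1 i, (hposiff x.1).mpr x.2.1, hsum x.1 x.2.2⟩ :
          {x : Fin m → ℕ // (∀ i, 0 < x i) ∧ ∑ i, x i ^ n = b * c ^ n}))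
    intro x y hxy
    exact Subtype.ext (hinj x.1 y.1 (congrArg Subtype.val hxy))
  have hN : Nat.card {x : Fin m → ℕ // ¬(∀ i, 0 < x i) ∧ ∑ i, x i ^ n = b} ≤
      Nat.card {x : Fin m → ℕ // ¬(∀ i, 0 < x i) ∧ ∑ i, x i ^ n = b * c ^ n} := by
    apply Nat.card_le_card_of_injective
      (fun x : {x : Fin m → ℕ // ¬(∀ i, 0 < x i) ∧ ∑ i, x i ^ n = b} =>
        (⟨fun i => c * x.1 i, fun hp => x.2.1 ((hposiff x.1).mp hp), hsum x.1 x.2.2⟩ :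
          {x : Fin m → ℕ // ¬(∀ i, 0 < x i) ∧ ∑ i, x i ^ n = b * c ^ n}))
    intro x y hxy
    exact Subtype.ext (hinj x.1 y.1 (congrArg Subtype.val hxy))
  -- splitting the total counts into positive and non-positive parts
  have hsplit : ∀ (d : ℕ), Nat.card {x : Fin m → ℕ // ∑ i, x i ^ n = d} =
      Nat.card {x : Fin m → ℕ // (∀ i, 0 < x i) ∧ ∑ i, x i ^ n = d} +
      Nat.card {x : Fin m → ℕ // ¬(∀ i, 0 < x i) ∧ ∑ i, x i ^ n = d} := by
    intro d
    have hfin := sol_finite n m d hn1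
    rw [card_split {x : Fin m → ℕ // ∑ i, x i ^ n = d} (fun x => ∀ i, 0 < x.1 i)]
    congr 1
    · exact Nat.card_congr
        ((Equiv.subtypeSubtypeEquivSubtypeInter
            (fun x : Fin m → ℕ => ∑ i, x i ^ n = d) (fun x => ∀ i, 0 < x i)).trans
          (Equiv.subtypeEquivRight (fun x => and_comm)))
    · exact Nat.card_congr
        ((Equiv.subtypeSubtypeEquivSubtypeInter
            (fun x : Fin m → ℕ => ∑ i, x i ^ n = d) (fun x => ¬ ∀ i, 0 < x i)).trans
          (Equiv.subtypeEquivRight (fun x => and_comm)))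
  have h1 := hsplit (b * c ^ n)
  have h2 := hsplit b
  rw [h1, h2] at h
  exact Nat.le_antisymm
    (Nat.le_of_add_le_add_right (h.le.trans (Nat.add_le_add_left hN _))) hP
end

section
/- Let n ≥ 3 be a natural number, p a prime, and s ≥ 1 a natural number. Then the equation x_1^n + x_2^n = (p^s)^n has no solution in positive integers x_1, x_2. -/
/-- Elementary FLT for odd exponents when the right side is a prime power. -/
lemma odd_case_aux (q p m a b : ℕ) (hq : Odd q) (hq3 : 3 ≤ q) (hp : p.Prime)
    (ha : 0 < a) (hb : 0 < b) : a ^ q + b ^ q ≠ (p ^ m) ^ q := by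
  intro heq
  have hq0 : q ≠ 0 := by omega
  -- a < p^m and b < p^m
  have ha' : a < p ^ m := by
    have h1 : a ^ q < (p ^ m) ^ q := by
      have := pow_pos hb q
      omega
    exact lt_of_pow_lt_pow_left₀ q (Nat.zero_le _) h1
  have hb' : b < p ^ m := by
    have h1 : b ^ q < (p ^ m) ^ q := by
      have := pow_pos ha q
      omega
    exact lt_of_pow_lt_pow_left₀ q (Nat.zero_le _) h1
  -- p^m < a + b
  have hlow : p ^ m < a + b := by
    have h1 : a ^ q < a * (p ^ m) ^ (q - 1) := by
      have h : a ^ (q - 1) < (p ^ m) ^ (q - 1) := Nat.pow_lt_pow_left ha' (by omega)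
      calc a ^ q = a * a ^ (q - 1) := by
            rw [← pow_succ']
            congr 1
            omega
        _ < a * (p ^ m) ^ (q - 1) := mul_lt_mul_of_pos_left h ha
    have h2 : b ^ q < b * (p ^ m) ^ (q - 1) := by
      have h : b ^ (q - 1) < (p ^ m) ^ (q - 1) := Nat.pow_lt_pow_left hb' (by omega)
      calc b ^ q = b * b ^ (q - 1) := by
            rw [← pow_succ']
            congr 1
            omega
        _ < b * (p ^ m) ^ (q - 1) := mul_lt_mul_of_pos_left h hb
    have h3 : p ^ m * (p ^ m) ^ (q - 1) < (a + b) * (p ^ m) ^ (q - 1) := by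
      have h4 : p ^ m * (p ^ m) ^ (q - 1) = (p ^ m) ^ q := by
        rw [← pow_succ']
        congr 1
        omega
      rw [h4, ← heq, add_mul]
      omega
    exact Nat.lt_of_mul_lt_mul_right h3
  -- a + b < p^(m+1)
  have hhigh : a + b < p ^ (m + 1) := by
    have h0 : a + b < 2 * p ^ m := by omega
    have h2 : 2 * p ^ m ≤ p * p ^ m := Nat.mul_le_mul_right _ hp.two_le
    calc a + b < 2 * p ^ m := h0
      _ ≤ p * p ^ m := h2
      _ = p ^ (m + 1) := (pow_succ' p m).symm
  -- a + b divides p^(m*q), hence is a power of p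
  have hdvd : a + b ∣ p ^ (m * q) := by
    have hz : (a : ℤ) + b ∣ (a : ℤ) ^ q + (b : ℤ) ^ q := hq.add_dvd_pow_add_pow (a : ℤ) (b : ℤ)
    have hz' : (a : ℤ) + b ∣ ((p : ℤ) ^ (m * q)) := by
      have h : (a : ℤ) ^ q + (b : ℤ) ^ q = (p : ℤ) ^ (m * q) := by
        rw [pow_mul]
        exact_mod_cast heq
      rwa [h] at hz
    have h : ((a + b : ℕ) : ℤ) ∣ ((p ^ (m * q) : ℕ) : ℤ) := by push_cast; exact hz'
    exact_mod_cast h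
  obtain ⟨u, hu, hab⟩ := (Nat.dvd_prime_pow hp).mp hdvd
  rw [hab] at hlow hhigh
  have h1 : m < u := (Nat.pow_lt_pow_iff_right hp.one_lt).mp hlow
  have h2 : u < m + 1 := (Nat.pow_lt_pow_iff_right hp.one_lt).mp hhigh
  omega

/-- For `n ≥ 3`, `p` prime and `s ≥ 1`, the equation `x₁^n + x₂^n = (p^s)^n` has no
solution in positive integers. -/
theorem stmt_18 (n p s : ℕ) (hn : 3 ≤ n) (hp : p.Prime) (hs : 1 ≤ s) :
    ¬ ∃ x₁ x₂ : ℕ, 0 < x₁ ∧ 0 < x₂ ∧ x₁ ^ n + x₂ ^ n = (p ^ s) ^ n := by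
  rintro ⟨x₁, x₂, h1, h2, heq⟩
  have hn0 : n ≠ 0 := by omega
  -- find d dividing n with d odd and ≥ 3, or d = 4
  have hd : ∃ d, d ∣ n ∧ ((Odd d ∧ 3 ≤ d) ∨ d = 4) := by
    have hnd : ¬ 2 ∣ (n / 2 ^ n.factorization 2) := Nat.not_dvd_ordCompl Nat.prime_two hn0
    have hself : 2 ^ n.factorization 2 * (n / 2 ^ n.factorization 2) = n :=
      Nat.ordProj_mul_ordCompl_eq_self n 2
    have hodd : Odd (n / 2 ^ n.factorization 2) := by
      rcases Nat.even_or_odd (n / 2 ^ n.factorization 2) with h | h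
      · exact absurd h.two_dvd hnd
      · exact h
    by_cases hone : n / 2 ^ n.factorization 2 = 1
    · refine ⟨4, ?_, Or.inr rfl⟩
      rw [hone, mul_one] at hself
      have hv : 2 ≤ n.factorization 2 := by
        by_contra h
        have h2 : 2 ^ n.factorization 2 ≤ 2 ^ 1 := Nat.pow_le_pow_right (by norm_num) (by omega)
        omega
      calc (4 : ℕ) = 2 ^ 2 := rfl
        _ ∣ 2 ^ n.factorization 2 := pow_dvd_pow 2 hv
        _ = n := hself
    · refine ⟨n / 2 ^ n.factorization 2, Nat.ordCompl_dvd n 2, Or.inl ⟨hodd, ?_⟩⟩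
      have hpos : 0 < n / 2 ^ n.factorization 2 := Nat.ordCompl_pos 2 hn0
      rcases hodd with ⟨k, hk⟩
      omega
  obtain ⟨d, ⟨t, ht⟩, hcase⟩ := hd
  have ht0 : 0 < t := by
    rcases Nat.eq_zero_or_pos t with rfl | h
    · rw [mul_zero] at ht; omega
    · exact h
  have key : (x₁ ^ t) ^ d + (x₂ ^ t) ^ d = ((p ^ s) ^ t) ^ d := by
    rw [← pow_mul, ← pow_mul, ← pow_mul, mul_comm t d, ← ht]
    exact heq
  rcases hcase with ⟨hodd, hd3⟩ | rfl
  · have h : (p ^ s) ^ t = p ^ (s * t) := by rw [← pow_mul]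
    rw [h] at key
    exact odd_case_aux d p (s * t) (x₁ ^ t) (x₂ ^ t) hodd hd3 hp
      (pow_pos h1 t) (pow_pos h2 t) key
  · exact fermatLastTheoremFour (x₁ ^ t) (x₂ ^ t) ((p ^ s) ^ t)
      (pow_ne_zero _ h1.ne') (pow_ne_zero _ h2.ne')
      (pow_ne_zero _ (pow_ne_zero _ hp.pos.ne')) key
end

section
/- Let n ≥ 2 be a natural number, p any prime, s a nonnegative integer, and d ≥ 1 a natural number such that for every prime q dividing d there exists a natural number k ≥ 1 with q^k ≥ 3 and φ(q^k) ∣ 2n. Then the equation x_1^(2n) + x_2^(2n) = (p^s · d)^(2n) has no solution in positive integers x_1, x_2. In particular, for n ≥ 2 and nonnegative integers s_1, s_2, s, the equation x_1^(2n) + x_2^(2n) = (2^(s_1) · 3^(s_2) · p^s)^(2n) has no solution in positive integers. -/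
/-! A prime `q ∣ d` that is a φ-divisor of `m = 2n` must divide both `x₁` and `x₂`, because
modulo `q ^ k ≥ 3` every `m`-th power is `0` or `1`; dividing it out reduces `d` to `1`.
For `z = p ^ s`, either `4 ∣ m` and Fermat's theorem for exponent four applies, or `m` has an odd
prime factor `r` and the equation reads `X ^ r + Y ^ r = Z ^ r` with `Z` a power of `p`. Then
`X + Y ∣ Z ^ r` is a power of `p`, yet `Z < X + Y < 2 Z`, and no power of `p` lies there. -/

def FermatSolvable (m z : ℕ) : Prop :=
  ∃ x y : ℕ, 0 < x ∧ 0 < y ∧ x ^ m + y ^ m = z ^ m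

def IsPhiDivisor (q m : ℕ) : Prop :=
  ∃ k : ℕ, 1 ≤ k ∧ 3 ≤ q ^ k ∧ Nat.totient (q ^ k) ∣ m

theorem FermatSolvable.pos {m z : ℕ} (h : FermatSolvable m z) : 0 < z := by
  obtain ⟨x, y, hx, hy, h⟩ := h
  refine Nat.pos_of_ne_zero fun hz => ?_
  subst hz
  rcases m with _ | m <;> simp at h
  omega

theorem not_fermatSolvable_of_four_dvd {m z : ℕ} (hm : 4 ∣ m) : ¬ FermatSolvable m z := by
  intro h
  have hz := h.pos
  obtain ⟨x, y, hx, hy, hxyz⟩ := h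
  exact (fermatLastTheoremFour.mono hm) x y z hx.ne' hy.ne' hz.ne' hxyz

theorem pow_add_pow_lt_add_pow {X Y r : ℕ} (hX : 0 < X) (hY : 0 < Y) (hr : 1 < r) :
    X ^ r + Y ^ r < (X + Y) ^ r := by
  obtain ⟨j, rfl⟩ := Nat.exists_eq_add_of_lt hr
  have hXj : X ^ (j + 1) < (X + Y) ^ (j + 1) := Nat.pow_lt_pow_left (by omega) (by omega)
  have hYj : Y ^ (j + 1) ≤ (X + Y) ^ (j + 1) := Nat.pow_le_pow_left (by omega) _
  calc X ^ (1 + j + 1) + Y ^ (1 + j + 1) = X ^ (j + 1) * X + Y ^ (j + 1) * Y := by ring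
    _ < (X + Y) ^ (j + 1) * X + (X + Y) ^ (j + 1) * Y := by gcongr; omega
    _ = (X + Y) ^ (1 + j + 1) := by ring

theorem pow_add_pow_ne_prime_pow_pow {p r X Y t : ℕ} (hp : p.Prime) (hr : Odd r) (hr1 : 1 < r)
    (hX : 0 < X) (hY : 0 < Y) : X ^ r + Y ^ r ≠ (p ^ t) ^ r := by
  intro h
  have hdvd : X + Y ∣ p ^ (t * r) := pow_mul p t r ▸ h ▸ Odd.nat_add_dvd_pow_add_pow X Y hr
  obtain ⟨b, -, hb⟩ := (Nat.dvd_prime_pow hp).mp hdvd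
  have hr0 : r ≠ 0 := by omega
  have hXZ : X < p ^ t := (Nat.pow_lt_pow_iff_left hr0).mp (by have := pow_pos hY r; omega)
  have hYZ : Y < p ^ t := (Nat.pow_lt_pow_iff_left hr0).mp (by have := pow_pos hX r; omega)
  have hZXY : p ^ t < X + Y :=
    (Nat.pow_lt_pow_iff_left hr0).mp (h ▸ pow_add_pow_lt_add_pow hX hY hr1)
  have hXY : X + Y < p ^ (t + 1) := by
    rw [pow_succ]
    nlinarith [hp.two_le]
  rw [hb] at hZXY hXY
  have h1 := (Nat.pow_lt_pow_iff_right hp.one_lt).mp hZXY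
  have h2 := (Nat.pow_lt_pow_iff_right hp.one_lt).mp hXY
  omega

theorem not_fermatSolvable_prime_pow_of_odd_dvd {m p r : ℕ} (hp : p.Prime) (hr : Odd r)
    (hr1 : 1 < r) (hrm : r ∣ m) (s : ℕ) : ¬ FermatSolvable m (p ^ s) := by
  rintro ⟨x, y, hx, hy, h⟩
  obtain ⟨j, rfl⟩ := hrm
  apply pow_add_pow_ne_prime_pow_pow (t := s * j) hp hr hr1 (pow_pos hx j) (pow_pos hy j)
  simpa only [← pow_mul, mul_comm r j, mul_assoc] using h

theorem not_fermatSolvable_two_mul_prime_pow {n p : ℕ} (hn : 2 ≤ n) (hp : p.Prime) (s : ℕ) :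
    ¬ FermatSolvable (2 * n) (p ^ s) := by
  rcases n.eq_two_pow_or_exists_odd_prime_and_dvd with ⟨k, rfl⟩ | ⟨r, hr, hrn, hodd⟩
  · obtain ⟨j, rfl⟩ : ∃ j, k = j + 1 :=
      Nat.exists_eq_add_one_of_ne_zero (by rintro rfl; simp at hn)
    exact not_fermatSolvable_of_four_dvd ⟨2 ^ j, by ring⟩
  · exact not_fermatSolvable_prime_pow_of_odd_dvd hp hodd hr.one_lt (hrn.mul_left 2) s

theorem dvd_of_pow_add_pow_eq_pow {q k m x y z : ℕ} (hq : q.Prime) (hk : 3 ≤ q ^ k)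
    (hφ : Nat.totient (q ^ k) ∣ m) (hm : 0 < m) (hz : q ∣ z) (h : x ^ m + y ^ m = z ^ m) :
    q ∣ x := by
  have hkm : k ≤ m := by
    have hk0 : 0 < k := Nat.pos_of_ne_zero (by rintro rfl; simp at hk)
    have hdvd : q ^ (k - 1) ∣ m := by
      refine Dvd.dvd.trans ?_ hφ
      rw [Nat.totient_prime_pow hq hk0]
      exact dvd_mul_right _ _
    have := Nat.lt_pow_self (n := k - 1) hq.one_lt
    have := Nat.le_of_dvd hm hdvd
    omega
  have hunit : ∀ w, ¬ q ∣ w → (w : ZMod (q ^ k)) ^ m = 1 := by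
    intro w hw
    have hcop : w.Coprime (q ^ k) := ((hq.coprime_iff_not_dvd.mpr hw).symm).pow_right k
    obtain ⟨t, rfl⟩ := hφ
    have := (Nat.ModEq.pow_totient hcop).pow t
    rw [one_pow, ← pow_mul] at this
    exact_mod_cast (ZMod.natCast_eq_natCast_iff _ _ _).mpr this
  have hzero : ∀ w, q ∣ w → (w : ZMod (q ^ k)) ^ m = 0 := by
    intro w hw
    rw [← Nat.cast_pow, ZMod.natCast_eq_zero_iff]
    exact (pow_dvd_pow q hkm).trans (pow_dvd_pow_of_dvd hw m)
  have hsmall : ∀ c, 0 < c → c < q ^ k → (c : ZMod (q ^ k)) ≠ 0 := by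
    intro c hc0 hc h
    rw [ZMod.natCast_eq_zero_iff] at h
    exact absurd (Nat.le_of_dvd hc0 h) (by omega)
  have hmod : (x : ZMod (q ^ k)) ^ m + (y : ZMod (q ^ k)) ^ m = 0 := by
    rw [← hzero z hz]
    exact_mod_cast congrArg (Nat.cast : ℕ → ZMod (q ^ k)) h
  by_contra hx
  rw [hunit x hx] at hmod
  by_cases hy : q ∣ y
  · rw [hzero y hy, add_zero] at hmod
    exact hsmall 1 one_pos (by omega) (by simpa using hmod)
  · rw [hunit y hy] at hmod
    exact hsmall 2 two_pos (by omega) (by simpa [one_add_one_eq_two] using hmod)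

theorem FermatSolvable.of_mul_right_of_isPhiDivisor {m c q : ℕ} (hq : q.Prime) (hm : 0 < m)
    (hqm : IsPhiDivisor q m) (h : FermatSolvable m (c * q)) : FermatSolvable m c := by
  obtain ⟨k, -, hk, hφ⟩ := hqm
  obtain ⟨x, y, hx, hy, h⟩ := h
  have hz : q ∣ c * q := dvd_mul_left q c
  obtain ⟨a, rfl⟩ := dvd_of_pow_add_pow_eq_pow hq hk hφ hm hz h
  obtain ⟨b, rfl⟩ := dvd_of_pow_add_pow_eq_pow hq hk hφ hm hz ((add_comm _ _).trans h)
  refine ⟨a, b, Nat.pos_of_mul_pos_left hx, Nat.pos_of_mul_pos_left hy, ?_⟩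
  apply Nat.eq_of_mul_eq_mul_left (pow_pos hq.pos m)
  calc q ^ m * (a ^ m + b ^ m) = (q * a) ^ m + (q * b) ^ m := by ring
    _ = q ^ m * c ^ m := by rw [h]; ring

theorem FermatSolvable.of_mul_right {m c d : ℕ} (hm : 0 < m)
    (hd : ∀ q : ℕ, q.Prime → q ∣ d → IsPhiDivisor q m) (h : FermatSolvable m (c * d)) :
    FermatSolvable m c := by
  induction d using Nat.recOnMul generalizing c with
  | zero => simpa using h.pos
  | one => simpa using h
  | prime q hq => exact h.of_mul_right_of_isPhiDivisor hq hm (hd q hq dvd_rfl)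
  | mul a b iha ihb =>
    refine iha (fun q hq hqa => hd q hq (hqa.mul_right b)) ?_
    exact ihb (fun q hq hqb => hd q hq (hqb.mul_left a)) (by rwa [← mul_assoc] at h)

theorem isPhiDivisor_of_dvd_two_pow_mul_three_pow {q s₁ s₂ : ℕ} (n : ℕ) (hq : q.Prime)
    (hqd : q ∣ 2 ^ s₁ * 3 ^ s₂) : IsPhiDivisor q (2 * n) := by
  rcases hq.dvd_mul.mp hqd with h2 | h3
  · obtain rfl := (Nat.prime_dvd_prime_iff_eq hq Nat.prime_two).mp (hq.dvd_of_dvd_pow h2)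
    refine ⟨2, by norm_num, by norm_num, ?_⟩
    rw [show Nat.totient (2 ^ 2) = 2 by decide]
    exact dvd_mul_right 2 n
  · obtain rfl := (Nat.prime_dvd_prime_iff_eq hq Nat.prime_three).mp (hq.dvd_of_dvd_pow h3)
    refine ⟨1, le_rfl, by norm_num, ?_⟩
    rw [pow_one, Nat.totient_prime Nat.prime_three]
    exact dvd_mul_right 2 n

theorem stmt_19_general (n p s d : ℕ) (hn : 2 ≤ n) (hp : p.Prime)
    (hφ : ∀ q : ℕ, q.Prime → q ∣ d →
      ∃ k : ℕ, 1 ≤ k ∧ 3 ≤ q ^ k ∧ Nat.totient (q ^ k) ∣ 2 * n) :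
    (¬ ∃ x₁ x₂ : ℕ, 0 < x₁ ∧ 0 < x₂ ∧
        x₁ ^ (2 * n) + x₂ ^ (2 * n) = (p ^ s * d) ^ (2 * n)) ∧
    (∀ s₁ s₂ : ℕ, ¬ ∃ x₁ x₂ : ℕ, 0 < x₁ ∧ 0 < x₂ ∧
        x₁ ^ (2 * n) + x₂ ^ (2 * n) = (2 ^ s₁ * 3 ^ s₂ * p ^ s) ^ (2 * n)) := by
  have hm : 0 < 2 * n := by omega
  refine ⟨fun h => ?_, fun s₁ s₂ h => ?_⟩
  · exact not_fermatSolvable_two_mul_prime_pow hn hp s (.of_mul_right hm hφ h)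
  · rw [mul_comm (2 ^ s₁ * 3 ^ s₂)] at h
    exact not_fermatSolvable_two_mul_prime_pow hn hp s
      (.of_mul_right hm (fun q hq => isPhiDivisor_of_dvd_two_pow_mul_three_pow n hq) h)

/-- For `n ≥ 2`, any prime `p`, any nonnegative `s`, and any `d ≥ 1` such that every prime
`q ∣ d` admits `k ≥ 1` with `q^k ≥ 3` and `φ(q^k) ∣ 2n`, the equation
`x₁^(2n) + x₂^(2n) = (p^s·d)^(2n)` has no solution in positive integers; in particular
`x₁^(2n) + x₂^(2n) = (2^(s₁)·3^(s₂)·p^s)^(2n)` has no solution in positive integers. -/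
theorem stmt_19 (n p s d : ℕ) (hn : 2 ≤ n) (hp : p.Prime) (hd : 1 ≤ d)
    (hφ : ∀ q : ℕ, q.Prime → q ∣ d →
      ∃ k : ℕ, 1 ≤ k ∧ 3 ≤ q ^ k ∧ Nat.totient (q ^ k) ∣ 2 * n) :
    (¬ ∃ x₁ x₂ : ℕ, 0 < x₁ ∧ 0 < x₂ ∧
        x₁ ^ (2 * n) + x₂ ^ (2 * n) = (p ^ s * d) ^ (2 * n)) ∧
    (∀ s₁ s₂ : ℕ, ¬ ∃ x₁ x₂ : ℕ, 0 < x₁ ∧ 0 < x₂ ∧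
        x₁ ^ (2 * n) + x₂ ^ (2 * n) = (2 ^ s₁ * 3 ^ s₂ * p ^ s) ^ (2 * n)) :=
  stmt_19_general n p s d hn hp hφ
end
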